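/- arXiv:1907.09087 — 5 statements merged into one kernel-verified Lean document; each statement's English description precedes it below -/
import Mathlib

section
/- In the power series ring ℚ[[q]] one has the identity Σ_{d≥2} (12·C_{d−2}/d)·q^d = (6q − 1) + (1 − 4q)·(1 − 2q·F(q)). (This is the one-variable identity proved inside Lemma 4.3, obtained by integrating the Catalan generating function: the left side is the generating function of the sequence b_d = 12·C_{d−2}/d, and 1 − 2q·F(q) is the power-series form of (1−4q)^{1/2}, so the right side is (6q−1) + (1−4q)^{3/2}.) -/
/-!
Expanding, the right side is `2q − 2qF + 8q²F`, whose coefficient of `q^(n+2)` is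
`8 C_n − 2 C_{n+1}`. By the recurrence `(n + 2) C_{n+1} = (4n + 2) C_n` this is
`(8(n + 2) − 2(4n + 2)) C_n / (n + 2) = 12 C_n / (n + 2)`, the coefficient on the left.
-/

/-- The generating function `F(q) = Σ_{n≥0} C_n q^n ∈ ℚ[[q]]` of the Catalan numbers. -/
noncomputable def catalanGF : PowerSeries ℚ := PowerSeries.mk fun n => (catalan n : ℚ)

open PowerSeries

theorem add_two_mul_catalan_succ (n : ℕ) :
    (n + 2) * catalan (n + 1) = (4 * n + 2) * catalan n := by
  refine Nat.eq_of_mul_eq_mul_left n.succ_pos ?_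
  calc (n + 1) * ((n + 2) * catalan (n + 1))
      = (n + 1) * (n + 1).centralBinom := by rw [← succ_mul_catalan_eq_centralBinom]
    _ = 2 * (2 * n + 1) * ((n + 1) * catalan n) := by
        rw [Nat.succ_mul_centralBinom_succ, succ_mul_catalan_eq_centralBinom]
    _ = (n + 1) * ((4 * n + 2) * catalan n) := by ring

@[simp]
theorem coeff_catalanGF (n : ℕ) : coeff n catalanGF = catalan n :=
  coeff_mk n _

/-- In `ℚ[[q]]`: `Σ_{d≥2} (12·C_{d−2}/d)·q^d = (6q − 1) + (1 − 4q)·(1 − 2q·F(q))`,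
where `1 − 2q·F(q)` is the power-series form of `(1−4q)^{1/2}`. -/
theorem catalan_integrated_gf :
    (PowerSeries.mk fun d => if 2 ≤ d then 12 * (catalan (d - 2) : ℚ) / (d : ℚ) else 0) =
      (6 * PowerSeries.X - 1) +
        (1 - 4 * PowerSeries.X) * (1 - 2 * PowerSeries.X * catalanGF) := by
  have hrhs : (6 * X - 1) + (1 - 4 * X) * (1 - 2 * X * catalanGF)
      = X * C (2 : ℚ) + X * (C (-2 : ℚ) * catalanGF) + X * (X * (C (8 : ℚ) * catalanGF)) := by
    simp only [map_neg, map_ofNat]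
    ring
  rw [hrhs]
  ext (_ | _ | n)
  · simp
  · simp [coeff_succ_X_mul]
  · have hrec : ((n : ℚ) + 2) * catalan (n + 1) = (4 * n + 2) * catalan n := by
      exact_mod_cast add_two_mul_catalan_succ n
    simp only [map_add, coeff_succ_X_mul, coeff_C_mul, coeff_C, coeff_catalanGF, coeff_mk,
      if_pos (by omega : 2 ≤ n + 2), if_neg n.succ_ne_zero]
    push_cast
    field_simp
    linear_combination 2 * hrec
end

section
/- For every integer n ≥ 2, the polynomial Σ_{k+ℓ=n, k≥1, ℓ≥1} U_{k−1}·U_{ℓ−1} ∈ ℚ[q] (the coefficient of x^n in (x/(1−x+x²q))² as a power series in x over ℚ[q]) has degree exactly ⌊n/2⌋ − 1 in q. (This is the final assertion of Lemma 4.8.) -/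
/-- `U n ∈ ℚ[q]`: `U 0 = U 1 = 1`, `U (n+2) = U (n+1) − q·U n`;
equivalently `U n = (α^{n+1} − β^{n+1})/(α − β)` where `α, β` are the roots of `t² − t + q`. -/
noncomputable def U : ℕ → Polynomial ℚ
  | 0 => 1
  | 1 => 1
  | (n + 2) => U (n + 1) - Polynomial.X * U n

/-- `Σ_{k+ℓ=n, k≥1, ℓ≥1} U_{k−1}·U_{ℓ−1} ∈ ℚ[q]`, the coefficient of `x^n` in
`(x/(1−x+x²q))²`. -/
noncomputable def diagUU (n : ℕ) : Polynomial ℚ :=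
  ∑ k ∈ Finset.range (n - 1), U k * U (n - 2 - k)

open Polynomial

lemma U_degree_le : ∀ n : ℕ, (U n).degree ≤ ((n / 2 : ℕ) : WithBot ℕ)
  | 0 => by simpa [U] using degree_one_le
  | 1 => by simpa [U] using degree_one_le
  | (n + 2) => by
    rw [show U (n + 2) = U (n + 1) - Polynomial.X * U n from rfl]
    apply le_trans (degree_sub_le _ _)
    apply max_le
    · refine le_trans (U_degree_le (n + 1)) ?_
      have h : (n + 1) / 2 ≤ (n + 2) / 2 := by omega
      exact_mod_cast h
    · apply le_trans (degree_mul_le _ _)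
      apply le_trans (add_le_add degree_X_le (U_degree_le n))
      rw [← Nat.cast_one, ← Nat.cast_add]
      have h : 1 + n / 2 ≤ (n + 2) / 2 := by omega
      exact_mod_cast h

lemma U_lead : ∀ m : ℕ, (U (2*m)).coeff m = (-1:ℚ)^m ∧ (U (2*m+1)).coeff m = (-1:ℚ)^m * (m+1)
  | 0 => by norm_num [U]
  | (m + 1) => by
    obtain ⟨h1, h2⟩ := U_lead m
    have e1 : (U (2*(m+1))).coeff (m+1) = (-1:ℚ)^(m+1) := by
      have : U (2*(m+1)) = U (2*m+1) - Polynomial.X * U (2*m) := by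
        rw [show 2*(m+1) = (2*m) + 2 by ring]; rfl
      rw [this, coeff_sub, coeff_X_mul, h1]
      have hz : (U (2*m+1)).coeff (m+1) = 0 := by
        apply coeff_eq_zero_of_degree_lt
        apply lt_of_le_of_lt (U_degree_le (2*m+1))
        have h : (2*m+1)/2 < m + 1 := by omega
        exact_mod_cast h
      rw [hz]; ring
    refine ⟨e1, ?_⟩
    have : U (2*(m+1)+1) = U (2*(m+1)) - Polynomial.X * U (2*m+1) := by
      rw [show 2*(m+1)+1 = (2*m+1) + 2 by ring]; rfl
    rw [this, coeff_sub, coeff_X_mul, e1, h2]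
    push_cast; ring

lemma U_coeff_half_ne (n : ℕ) : (U n).coeff (n / 2) ≠ 0 := by
  rcases Nat.even_or_odd n with ⟨m, rfl⟩ | ⟨m, rfl⟩
  · rw [show m + m = 2*m by ring, show 2*m/2 = m by omega, (U_lead m).1]
    positivity
  · rw [show (2*m+1)/2 = m by omega, (U_lead m).2]
    positivity

lemma U_natDegree (n : ℕ) : (U n).natDegree = n / 2 := by
  apply le_antisymm
  · exact natDegree_le_iff_degree_le.2 (U_degree_le n)
  · exact le_natDegree_of_ne_zero (U_coeff_half_ne n)

lemma diag_eq : ∀ n : ℕ, diagUU n = -(U n).derivative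
  | 0 => by simp [diagUU, U]
  | 1 => by simp [diagUU, U]
  | 2 => by
    rw [show U 2 = U 1 - Polynomial.X * U 0 from rfl]
    simp [diagUU, U, Finset.sum_range_succ]
  | 3 => by
    rw [show U 3 = U 2 - Polynomial.X * U 1 from rfl,
        show U 2 = U 1 - Polynomial.X * U 0 from rfl]
    simp [diagUU, U, Finset.sum_range_succ]
  | (n + 4) => by
    have ih2 := diag_eq (n + 2)
    have ih3 := diag_eq (n + 3)
    have L : diagUU (n+4) = (∑ k ∈ Finset.range (n+1), U k * U (n+4-2-k))
        + U (n+1) * U 1 + U (n+2) * U 0 := by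
      unfold diagUU
      rw [show n+4-1 = (n+1)+1+1 by omega, Finset.sum_range_succ, Finset.sum_range_succ,
          show n+4-2-(n+1+1) = 0 by omega, show n+4-2-(n+1) = 1 by omega]
    have M : diagUU (n+3) = (∑ k ∈ Finset.range (n+1), U k * U (n+3-2-k)) + U (n+1) * U 0 := by
      unfold diagUU
      rw [show n+3-1 = (n+1)+1 by omega, Finset.sum_range_succ, show n+3-2-(n+1) = 0 by omega]
    have N : diagUU (n+2) = ∑ k ∈ Finset.range (n+1), U k * U (n+2-2-k) := by
      unfold diagUU
      rw [show n+2-1 = n+1 by omega]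
    have hsplit : ∑ k ∈ Finset.range (n+1), U k * U (n+4-2-k)
        = (∑ k ∈ Finset.range (n+1), U k * U (n+3-2-k))
          - Polynomial.X * ∑ k ∈ Finset.range (n+1), U k * U (n+2-2-k) := by
      rw [Finset.mul_sum, ← Finset.sum_sub_distrib]
      apply Finset.sum_congr rfl
      intro k hk
      have hk' : k ≤ n := by simpa [Nat.lt_succ_iff] using hk
      rw [show n+4-2-k = (n-k)+2 by omega, show n+3-2-k = (n-k)+1 by omega,
          show n+2-2-k = n-k by omega]
      rw [show U ((n-k)+2) = U ((n-k)+1) - Polynomial.X * U (n-k) from rfl]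
      ring
    have key : diagUU (n+4) = diagUU (n+3) - Polynomial.X * diagUU (n+2) + U (n+2) := by
      rw [L, M, N, hsplit]
      rw [show U 0 = 1 from rfl, show U 1 = 1 from rfl]
      ring
    rw [key, ih2, ih3]
    rw [show U (n+4) = U (n+3) - Polynomial.X * U (n+2) from rfl]
    simp only [derivative_sub, derivative_mul, derivative_X, one_mul]
    ring

/-- The final assertion of Lemma 4.8: for `n ≥ 2`, the coefficient of `x^n` in
`(x/(1−x+x²q))²` has degree exactly `⌊n/2⌋ − 1` in `q`. -/
theorem rational_function_x_coeff_degree (n : ℕ) (hn : 2 ≤ n) :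
    (diagUU n).degree = ((n / 2 - 1 : ℕ) : WithBot ℕ) := by
  rw [diag_eq n, degree_neg, degree_derivative_eq _ (by rw [U_natDegree]; omega), U_natDegree]
end

section
/- Let d ≥ 2 and let n_1 ≥ n_2 ≥ n_3 ≥ n_4 be integers with 0 ≤ n_i ≤ d−1 for all i and n_1+n_2+n_3+n_4 = 2d−4. Then the coefficient of q^{d−1} in the power series (q·F(q) − 1/2)·U_{n_1}·U_{n_2}·U_{n_3}·U_{n_4} ∈ ℚ[[q]] equals min(d−n_1−1, n_4+1). (This is the generating-function form, via the dictionary of Lemma 4.11, of Lemma 4.12: the Grassmannian intersection number ∫_{Gr(2,d)} σ_{n_1}σ_{n_2}σ_{n_3}σ_{n_4} equals min(d−n_1−1, n_4+1); here q·F(q) − 1/2 is the power-series form of −(1/2)(1−4q)^{1/2} and U_{n_i} = s_{n_i}(α,β).) -/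
open Finset

section PolynomialIdentities

open Polynomial

lemma U_add_two (n : ℕ) : U (n + 2) = U (n + 1) - X * U n := rfl

lemma U_succ_mul_U_succ (a b : ℕ) : U (a + 1) * U (b + 1) = U (a + b + 2) + X * (U a * U b) := by
  induction b using Nat.twoStepInduction with
  | zero => simp [U]
  | one => simp only [U]; ring
  | more b ih₂ ih₁ =>
    rw [U_add_two (b + 1), mul_sub, ih₁, mul_left_comm (U (a + 1)), ih₂, U_add_two b,
      show a + (b + 2) + 2 = a + b + 2 + 2 by ring, U_add_two (a + b + 2),
      show a + (b + 1) + 2 = a + b + 2 + 1 by ring]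
    ring

lemma U_add_mul_U (e b : ℕ) :
    U (b + e) * U b = ∑ i ∈ range (b + 1), X ^ (b - i) * U (e + 2 * i) := by
  induction b with
  | zero => simp [U]
  | succ b ih =>
    rw [show b + 1 + e = b + e + 1 by ring, U_succ_mul_U_succ, ih, mul_sum,
      sum_range_succ _ (b + 1), add_comm, Nat.sub_self, pow_zero, one_mul, show e + 2 * (b + 1) = b + e + b + 2 by ring]
    congr 1
    refine sum_congr rfl fun i hi => ?_
    rw [show b + 1 - i = b - i + 1 by have := mem_range.mp hi; omega, pow_succ]
    ring

end PolynomialIdentities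

open PowerSeries

lemma catalanGF_eq_map : catalanGF = map (Nat.castRingHom ℚ) catalanSeries := by
  ext n; simp [catalanGF]

lemma catalanGF_sq_mul_X_add_one : catalanGF ^ 2 * X + 1 = catalanGF := by
  simpa [catalanGF_eq_map] using congrArg (map (Nat.castRingHom ℚ)) catalanSeries_sq_mul_X_add_one

lemma coeff_pow_add_pow_eq_zero {R : Type*} [CommRing R] {a b : R⟦X⟧} (hab : a + b = 1)
    (hmul : a * b = X) :
    ∀ {n i : ℕ}, n < 2 * i → coeff i (a ^ n + b ^ n) = 0 := by
  intro n
  induction n using Nat.twoStepInduction with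
  | zero =>
    intro i hi
    rw [pow_zero, pow_zero, map_add, coeff_one, if_neg (by omega), add_zero]
  | one => intro i hi; rw [pow_one, pow_one, hab, coeff_one, if_neg (by omega)]
  | more n ih₂ ih₁ =>
    intro i hi
    obtain ⟨j, rfl⟩ : ∃ j, i = j + 1 := ⟨i - 1, by omega⟩
    have hrec : a ^ (n + 2) + b ^ (n + 2) = (a ^ (n + 1) + b ^ (n + 1)) - X * (a ^ n + b ^ n) := by
      linear_combination (a ^ (n + 1) + b ^ (n + 1)) * hab - (a ^ n + b ^ n) * hmul
    rw [hrec, map_sub, coeff_succ_X_mul, ih₁ (by omega), ih₂ (by omega), sub_zero]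

lemma coe_U_zero : ((U 0 : Polynomial ℚ) : ℚ⟦X⟧) = 1 := by simp [U]

lemma coe_U_one : ((U 1 : Polynomial ℚ) : ℚ⟦X⟧) = 1 := by simp [U]

lemma coe_U_add_two (n : ℕ) :
    ((U (n + 2) : Polynomial ℚ) : ℚ⟦X⟧) = (U (n + 1) : ℚ⟦X⟧) - X * (U n : ℚ⟦X⟧) := by
  rw [U_add_two, Polynomial.coe_sub, Polynomial.coe_mul, Polynomial.coe_X]

lemma sub_mul_coe_U {a b : ℚ⟦X⟧} (hab : a + b = 1) (hmul : a * b = X) (k : ℕ) :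
    (b - a) * (U k : ℚ⟦X⟧) = b ^ (k + 1) - a ^ (k + 1) := by
  induction k using Nat.twoStepInduction with
  | zero => rw [coe_U_zero]; ring
  | one => rw [coe_U_one]; linear_combination (a - b) * hab
  | more k ih₂ ih₁ =>
    rw [coe_U_add_two, mul_sub, ih₁, mul_left_comm, ih₂]
    linear_combination (a ^ (k + 2) - b ^ (k + 2)) * hab + (b ^ (k + 1) - a ^ (k + 1)) * hmul

/-- Since `X * catalanGF = (1 - √(1 - 4X)) / 2`, this is `-√(1 - 4X) / 2`. -/
noncomputable def negHalfSqrt : ℚ⟦X⟧ := X * catalanGF - C (R := ℚ) (1 / 2)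

lemma one_sub_X_mul_catalanGF_mul : (1 - X * catalanGF) * (X * catalanGF) = X := by
  linear_combination (-X : ℚ⟦X⟧) * catalanGF_sq_mul_X_add_one

lemma two_mul_negHalfSqrt : 2 * negHalfSqrt = X * catalanGF - (1 - X * catalanGF) := by
  have : (2 : ℚ⟦X⟧) * C (R := ℚ) (1 / 2) = 1 := by
    rw [← map_ofNat (C (R := ℚ)) 2, ← map_mul]; norm_num
  rw [negHalfSqrt]; linear_combination (-1 : ℚ⟦X⟧) * this

lemma coeff_one_negHalfSqrt : coeff 1 negHalfSqrt = 1 := by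
  simp [negHalfSqrt, coeff_succ_X_mul, catalanGF]

lemma coeff_negHalfSqrt_mul_U_two_mul {m : ℕ} (hm : 1 ≤ m) :
    coeff (m + 1) (negHalfSqrt * (U (2 * m) : ℚ⟦X⟧)) = 0 := by
  set b := X * catalanGF
  have hab : (1 - b) + b = 1 := sub_add_cancel 1 b
  have hsplit : 2 * (negHalfSqrt * (U (2 * m) : ℚ⟦X⟧)) =
      2 * (X ^ (2 * m + 1) * catalanGF ^ (2 * m + 1)) -
        ((1 - b) ^ (2 * m + 1) + b ^ (2 * m + 1)) := by
    rw [← mul_assoc, two_mul_negHalfSqrt, sub_mul_coe_U hab one_sub_X_mul_catalanGF_mul]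
    ring
  have h := congrArg (coeff (m + 1)) hsplit
  rw [map_sub, coeff_pow_add_pow_eq_zero hab one_sub_X_mul_catalanGF_mul (by omega), sub_zero,
    ← map_ofNat (C (R := ℚ)) 2, coeff_C_mul, coeff_C_mul, coeff_X_pow_mul', if_neg (by omega),
    mul_zero] at h
  exact (mul_eq_zero.mp h).resolve_left two_ne_zero

lemma coeff_negHalfSqrt_mul_U_mul_U (a : ℕ) :
    ∀ {m b : ℕ}, a + b = 2 * m →
      coeff (m + 1) (negHalfSqrt * (U a : ℚ⟦X⟧) * (U b : ℚ⟦X⟧)) = if a = b then 1 else 0 := by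
  induction a with
  | zero =>
    rintro m b h
    rw [coe_U_zero, mul_one, show b = 2 * m by omega]
    rcases Nat.eq_zero_or_pos m with rfl | hm
    · simpa [coe_U_zero] using coeff_one_negHalfSqrt
    · rw [coeff_negHalfSqrt_mul_U_two_mul hm, if_neg (by omega)]
  | succ a ih =>
    rintro m (_ | b) h
    · rw [coe_U_zero, mul_one, show a + 1 = 2 * m by omega,
        coeff_negHalfSqrt_mul_U_two_mul (by omega), if_neg (by omega)]
    · obtain ⟨m, rfl⟩ : ∃ m', m = m' + 1 := ⟨m - 1, by omega⟩
      rw [mul_assoc, ← Polynomial.coe_mul, U_succ_mul_U_succ, Polynomial.coe_add,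
        Polynomial.coe_mul, Polynomial.coe_X, Polynomial.coe_mul, mul_add, map_add,
        show a + b + 2 = 2 * (m + 1) by omega, coeff_negHalfSqrt_mul_U_two_mul (by omega),
        mul_left_comm, coeff_succ_X_mul, ← mul_assoc, ih (by omega), zero_add]
      simp only [Nat.add_right_cancel_iff]

lemma coe_U_add_mul_coe_U (e b : ℕ) :
    (U (b + e) : ℚ⟦X⟧) * (U b : ℚ⟦X⟧) =
      ∑ i ∈ range (b + 1), X ^ (b - i) * (U (e + 2 * i) : ℚ⟦X⟧) := by
  simpa using congrArg Polynomial.coeToPowerSeries.ringHom (U_add_mul_U e b)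

lemma coeff_negHalfSqrt_mul_X_pow_mul_U_mul_X_pow_mul_U {D s t a b : ℕ} (hst : s + t ≤ D)
    (h : a + b + 2 * (s + t) = 2 * D) :
    coeff (D + 1) (negHalfSqrt * (X ^ s * (U a : ℚ⟦X⟧)) * (X ^ t * (U b : ℚ⟦X⟧))) =
      if a = b then 1 else 0 := by
  rw [show negHalfSqrt * (X ^ s * (U a : ℚ⟦X⟧)) * (X ^ t * (U b : ℚ⟦X⟧)) =
      X ^ (s + t) * (negHalfSqrt * (U a : ℚ⟦X⟧) * (U b : ℚ⟦X⟧)) by ring,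
    show D + 1 = D - (s + t) + 1 + (s + t) by omega, coeff_X_pow_mul,
    coeff_negHalfSqrt_mul_U_mul_U a (by omega)]

lemma coeff_negHalfSqrt_mul_U_mul_U_mul_U_mul_U {D n e k f : ℕ}
    (h : 2 * n + e + 2 * k + f = 2 * D) :
    coeff (D + 1) (negHalfSqrt * (U (n + e) : ℚ⟦X⟧) * (U n : ℚ⟦X⟧) * (U (k + f) : ℚ⟦X⟧) *
      (U k : ℚ⟦X⟧)) =
      ∑ i ∈ range (n + 1), ∑ j ∈ range (k + 1), if e + 2 * i = f + 2 * j then 1 else 0 := by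
  rw [show negHalfSqrt * (U (n + e) : ℚ⟦X⟧) * (U n : ℚ⟦X⟧) * (U (k + f) : ℚ⟦X⟧) * (U k : ℚ⟦X⟧) =
      negHalfSqrt * ((U (n + e) : ℚ⟦X⟧) * (U n : ℚ⟦X⟧)) * ((U (k + f) : ℚ⟦X⟧) * (U k : ℚ⟦X⟧)) by
      ring, coe_U_add_mul_coe_U, coe_U_add_mul_coe_U, mul_assoc, sum_mul_sum, mul_sum, map_sum]
  refine sum_congr rfl fun i hi => ?_
  rw [mul_sum, map_sum]
  refine sum_congr rfl fun j hj => ?_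
  have := mem_range.mp hi
  have := mem_range.mp hj
  rw [← mul_assoc]
  exact coeff_negHalfSqrt_mul_X_pow_mul_U_mul_X_pow_mul_U (by omega) (by omega)

lemma sum_range_sum_range_ite_eq {e f n k : ℕ} (hpar : e % 2 = f % 2) :
    ∑ i ∈ range (n + 1), ∑ j ∈ range (k + 1), (if e + 2 * i = f + 2 * j then 1 else 0 : ℚ) =
      (#(Ico ((f - e + 1) / 2) (min (n + 1) ((f + 2 * k + 2 - e) / 2))) : ℚ) := by
  have hinner : ∀ i, ∑ j ∈ range (k + 1), (if e + 2 * i = f + 2 * j then 1 else 0 : ℚ) =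
      if f ≤ e + 2 * i ∧ e + 2 * i ≤ f + 2 * k then 1 else 0 := by
    intro i
    split_ifs with hi
    · rw [sum_eq_single_of_mem ((e + 2 * i - f) / 2) (mem_range.mpr (by omega)), if_pos (by omega)]
      exact fun j _ hj => if_neg (by omega)
    · exact sum_eq_zero fun j hj => if_neg (by have := mem_range.mp hj; omega)
  simp_rw [hinner, sum_boole]
  congr 2
  ext i
  simp only [mem_filter, mem_range, mem_Ico, lt_min_iff]
  omega

theorem integral_fourfold_product_general (d n1 n2 n3 n4 : ℕ) (hd : 2 ≤ d)
    (h12 : n2 ≤ n1) (h23 : n3 ≤ n2) (h34 : n4 ≤ n3)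
    (hsum : n1 + n2 + n3 + n4 = 2 * d - 4) :
    PowerSeries.coeff (R := ℚ) (d - 1)
        ((PowerSeries.X * catalanGF - PowerSeries.C (R := ℚ) (1/2)) *
          ((U n1 : Polynomial ℚ) : PowerSeries ℚ) * ((U n2 : Polynomial ℚ) : PowerSeries ℚ) *
          ((U n3 : Polynomial ℚ) : PowerSeries ℚ) * ((U n4 : Polynomial ℚ) : PowerSeries ℚ)) =
      ((min (d - n1 - 1) (n4 + 1) : ℕ) : ℚ) := by
  obtain ⟨D, rfl⟩ : ∃ D, d = D + 2 := ⟨d - 2, by omega⟩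
  obtain ⟨e, rfl⟩ : ∃ e, n1 = n2 + e := ⟨n1 - n2, by omega⟩
  obtain ⟨f, rfl⟩ : ∃ f, n3 = n4 + f := ⟨n3 - n4, by omega⟩
  change coeff (D + 1) (negHalfSqrt * _ * _ * _ * _) = _
  rw [coeff_negHalfSqrt_mul_U_mul_U_mul_U_mul_U (by omega),
    sum_range_sum_range_ite_eq (by omega), Nat.card_Ico]
  congr 2
  omega

/-- Lemma 4.12 in generating-function form: for `d ≥ 2` and
`n_1 ≥ n_2 ≥ n_3 ≥ n_4 ≥ 0` with `n_i ≤ d−1` and `n_1+n_2+n_3+n_4 = 2d−4`, the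
coefficient of `q^{d−1}` in `(q·F(q) − 1/2)·U_{n_1}·U_{n_2}·U_{n_3}·U_{n_4}` equals
`min(d−n_1−1, n_4+1)`, the intersection number `∫_{Gr(2,d)} σ_{n_1}σ_{n_2}σ_{n_3}σ_{n_4}`. -/
theorem integral_fourfold_product (d n1 n2 n3 n4 : ℕ) (hd : 2 ≤ d)
    (h12 : n2 ≤ n1) (h23 : n3 ≤ n2) (h34 : n4 ≤ n3) (h1d : n1 ≤ d - 1)
    (hsum : n1 + n2 + n3 + n4 = 2 * d - 4) :
    PowerSeries.coeff (R := ℚ) (d - 1)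
        ((PowerSeries.X * catalanGF - PowerSeries.C (R := ℚ) (1/2)) *
          ((U n1 : Polynomial ℚ) : PowerSeries ℚ) * ((U n2 : Polynomial ℚ) : PowerSeries ℚ) *
          ((U n3 : Polynomial ℚ) : PowerSeries ℚ) * ((U n4 : Polynomial ℚ) : PowerSeries ℚ)) =
      ((min (d - n1 - 1) (n4 + 1) : ℕ) : ℚ) :=
  integral_fourfold_product_general d n1 n2 n3 n4 hd h12 h23 h34 hsum
end

section
/- Let m ≥ n ≥ 0 be integers and let 0 ≤ k ≤ n. Then in the Laurent polynomial P_m·P_n ∈ ℤ[q,q⁻¹], the coefficient of q^{m+n−2k} and the coefficient of q^{−(m+n−2k)} are each equal to (k+1)·(mn − k(m+n) + (2/3)k(k−1)). (This is the coefficient computation of §4.4 used to prove the explicit formulas of Theorem 1.3(c).) -/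
/-- The Laurent polynomial `P_r = r·q^r + (r−2)·q^{r−2} + ⋯ + (2−r)·q^{2−r} + (−r)·q^{−r}
= Σ_{j=0}^{r} (r−2j)·q^{r−2j} ∈ ℤ[q,q⁻¹]`. -/
noncomputable def P (r : ℕ) : LaurentPolynomial ℤ :=
  ∑ j ∈ Finset.range (r + 1),
    LaurentPolynomial.C ((r : ℤ) - 2 * j) * LaurentPolynomial.T ((r : ℤ) - 2 * j)

/-! The substitution `q ↦ q⁻¹` negates each `P_r`, so it fixes `P_m·P_n` and the two coefficients
agree. The coefficient of `q^{m+n-2k}` collects the products `(m-2i)(n-2j)` with `i + j = k`, and this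
sum over the antidiagonal is evaluated by induction on `k`. -/

open LaurentPolynomial Finset

lemma invert_P (r : ℕ) : invert (P r) = -P r := by
  unfold P
  rw [map_sum, ← sum_range_reflect, ← sum_neg_distrib]
  refine sum_congr rfl fun j hj => ?_
  have hj : j ≤ r := Nat.lt_succ_iff.mp (mem_range.mp hj)
  have hexp : ((r : ℤ) - 2 * ((r + 1 - 1 - j : ℕ) : ℤ)) = -((r : ℤ) - 2 * j) := by omega
  rw [map_mul, invert_C, invert_T, hexp, neg_neg, map_neg, neg_mul]

lemma coeff_P_mul_P_neg (m n : ℕ) (x : ℤ) : (P m * P n).coeff (-x) = (P m * P n).coeff x := by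
  rw [← invert_apply, map_mul, invert_P, invert_P, neg_mul_neg]

lemma coeff_P_mul_P (m n : ℕ) (x : ℤ) :
    (P m * P n).coeff x = ∑ ij ∈ range (m + 1) ×ˢ range (n + 1),
      if ((m : ℤ) - 2 * ij.1) + ((n : ℤ) - 2 * ij.2) = x
      then ((m : ℤ) - 2 * ij.1) * ((n : ℤ) - 2 * ij.2) else 0 := by
  simp only [P, sum_mul_sum, ← single_eq_C_mul_T, AddMonoidAlgebra.single_mul_single,
    AddMonoidAlgebra.coeff_sum, AddMonoidAlgebra.coeff_single, Finsupp.finsetSum_apply,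
    Finsupp.single_apply, sum_product]

lemma coeff_P_mul_P_outer {m n k : ℕ} (hm : k ≤ m) (hn : k ≤ n) :
    (P m * P n).coeff ((m : ℤ) + n - 2 * k) =
      ∑ ij ∈ antidiagonal k, ((m : ℤ) - 2 * ij.1) * ((n : ℤ) - 2 * ij.2) := by
  rw [coeff_P_mul_P, ← sum_filter]
  refine sum_congr (ext fun ⟨i, j⟩ => ?_) fun _ _ => rfl
  simp only [mem_filter, mem_product, mem_range, HasAntidiagonal.mem_antidiagonal]
  omega

lemma sum_antidiagonal_sub_two_mul_mul_sub_two_mul (k : ℕ) (a b : ℚ) :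
    ∑ ij ∈ antidiagonal k, (a - 2 * ij.1) * (b - 2 * ij.2) =
      (k + 1) * (a * b - k * (a + b) + 2 / 3 * k * (k - 1)) := by
  induction k generalizing a with
  | zero => simp
  | succ k ih =>
    rw [Nat.sum_antidiagonal_succ]
    have hshift (x : ℚ) : a - 2 * (x + 1) = (a - 2) - 2 * x := by ring
    simp only [Nat.cast_add, Nat.cast_one, Nat.cast_zero, hshift, ih]
    ring

/-- For `m ≥ n ≥ 0` and `0 ≤ k ≤ n`, the coefficients of `q^{m+n−2k}` and of
`q^{−(m+n−2k)}` in `P_m·P_n` are each `(k+1)·(mn − k(m+n) + (2/3)k(k−1))`. -/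
theorem PmPn_outer_coeffs (m n k : ℕ) (hmn : n ≤ m) (hk : k ≤ n) :
    (((P m * P n).coeff ((m : ℤ) + n - 2 * k) : ℤ) : ℚ) =
        ((k : ℚ) + 1) * ((m : ℚ) * n - k * ((m : ℚ) + n) + (2/3) * k * ((k : ℚ) - 1)) ∧
    (((P m * P n).coeff (-((m : ℤ) + n - 2 * k)) : ℤ) : ℚ) =
        ((k : ℚ) + 1) * ((m : ℚ) * n - k * ((m : ℚ) + n) + (2/3) * k * ((k : ℚ) - 1)) := by
  have houter : (((P m * P n).coeff ((m : ℤ) + n - 2 * k) : ℤ) : ℚ) =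
      ((k : ℚ) + 1) * ((m : ℚ) * n - k * ((m : ℚ) + n) + (2/3) * k * ((k : ℚ) - 1)) := by
    rw [coeff_P_mul_P_outer (hk.trans hmn) hk, ← sum_antidiagonal_sub_two_mul_mul_sub_two_mul]
    push_cast
    rfl
  exact ⟨houter, by rwa [coeff_P_mul_P_neg]⟩
end

section
/- Let m ≥ n ≥ 0 be integers and let 0 ≤ k ≤ m−n. Then in the Laurent polynomial P_m·P_n ∈ ℤ[q,q⁻¹], the coefficient of q^{m−n−2k} equals −(1/3)·n(n+1)(n+2); in particular this coefficient is independent of k. (This is the coefficient computation of §4.4 used to prove the explicit formulas of Theorem 1.3(c).) -/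
/-! The exponents of `P_n` are `e_j = n - 2j`, and its coefficient at `q^{e_j}` is `e_j` itself.
For `d = m - n - 2k` with `0 ≤ k ≤ m - n`, each `d - e_j` is again an exponent of `P_m`, so
the coefficient of `q^d` in `P_m P_n` is `∑ (d - e_j) e_j = d ∑ e_j - ∑ e_j²`.
The exponents are symmetric about `0`, so `∑ e_j = 0` and the coefficient is `-∑ e_j²`,
independently of `d`; finally `∑_{j=0}^{n} (n - 2j)² = n(n+1)(n+2)/3`. -/

open Finset LaurentPolynomial

section Sums

variable {R : Type*} [CommRing R]

theorem sum_range_sub_two_mul (x : R) (N : ℕ) :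
    ∑ j ∈ range N, (x - 2 * j) = N * (x + 1 - N) := by
  induction N with
  | zero => simp
  | succ N ih => rw [sum_range_succ, ih]; push_cast; ring

theorem three_mul_sum_range_sub_two_mul_sq (x : R) (N : ℕ) :
    3 * ∑ j ∈ range N, (x - 2 * j) ^ 2 =
      N * (3 * x ^ 2 - 6 * x * (N - 1) + 2 * (N - 1) * (2 * N - 1)) := by
  induction N with
  | zero => simp
  | succ N ih => rw [sum_range_succ, mul_add, ih]; push_cast; ring

end Sums

theorem LaurentPolynomial.coeff_mul_C_mul_T {R : Type*} [Semiring R] (f : R[T;T⁻¹])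
    (c : R) (e d : ℤ) : (f * (C c * T e)).coeff d = f.coeff (d - e) * c := by
  rw [← single_eq_C_mul_T, AddMonoidAlgebra.coeff_mul_single_apply, sub_eq_add_neg]

theorem coeff_mul_P (f : ℤ[T;T⁻¹]) (n : ℕ) (d : ℤ) :
    (f * P n).coeff d =
      ∑ j ∈ range (n + 1), f.coeff (d - (n - 2 * j)) * ((n : ℤ) - 2 * j) := by
  simp only [P, mul_sum, AddMonoidAlgebra.coeff_sum, Finsupp.finsetSum_apply,
    coeff_mul_C_mul_T]

theorem coeff_P_sub_two_mul {r i : ℕ} (hi : i ≤ r) :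
    (P r).coeff ((r : ℤ) - 2 * i) = (r : ℤ) - 2 * i := by
  simp only [P, AddMonoidAlgebra.coeff_sum, Finsupp.finsetSum_apply, ← single_eq_C_mul_T,
    AddMonoidAlgebra.coeff_single, Finsupp.single_apply]
  rw [sum_eq_single_of_mem i (mem_range.2 (by omega)) (fun j _ hji => if_neg (by omega)),
    if_pos rfl]

theorem coeff_P_mul_P_s16 {m n k : ℕ} (h : n + k ≤ m) :
    (P m * P n).coeff ((m : ℤ) - n - 2 * k) =
      -∑ j ∈ range (n + 1), ((n : ℤ) - 2 * j) ^ 2 := by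
  set d : ℤ := (m : ℤ) - n - 2 * k
  have coeff_Pm : ∀ j ∈ range (n + 1), (P m).coeff (d - (n - 2 * j)) = d - (n - 2 * j) := by
    intro j hj
    have hj : j ≤ n := Nat.lt_succ_iff.1 (mem_range.1 hj)
    have hexp : d - (n - 2 * j) = (m : ℤ) - 2 * ((n + k - j : ℕ) : ℤ) := by
      simp only [d]; push_cast [Nat.cast_sub (by omega : j ≤ n + k)]; ring
    rw [hexp, coeff_P_sub_two_mul (by omega)]
  have sum_exponents : ∑ j ∈ range (n + 1), ((n : ℤ) - 2 * j) = 0 := by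
    rw [sum_range_sub_two_mul]; push_cast; ring
  calc (P m * P n).coeff d
      = ∑ j ∈ range (n + 1), (d - (n - 2 * j)) * ((n : ℤ) - 2 * j) := by
        rw [coeff_mul_P]; exact sum_congr rfl fun j hj => by rw [coeff_Pm j hj]
    _ = d * ∑ j ∈ range (n + 1), ((n : ℤ) - 2 * j) -
          ∑ j ∈ range (n + 1), ((n : ℤ) - 2 * j) ^ 2 := by
        rw [mul_sum, ← sum_sub_distrib]; exact sum_congr rfl fun j _ => by ring
    _ = -∑ j ∈ range (n + 1), ((n : ℤ) - 2 * j) ^ 2 := by rw [sum_exponents]; ring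

/-- For `m ≥ n ≥ 0` and `0 ≤ k ≤ m−n`, the coefficient of `q^{m−n−2k}` in `P_m·P_n`
equals `−(1/3)·n(n+1)(n+2)`; in particular it is independent of `k`. -/
theorem PmPn_middle_coeffs (m n k : ℕ) (hmn : n ≤ m) (hk : k ≤ m - n) :
    (((P m * P n).coeff ((m : ℤ) - n - 2 * k) : ℤ) : ℚ) =
      -(1/3) * (n : ℚ) * ((n : ℚ) + 1) * ((n : ℚ) + 2) := by
  have hsq := three_mul_sum_range_sub_two_mul_sq (n : ℚ) (n + 1)
  rw [coeff_P_mul_P_s16 (by omega)]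
  push_cast at hsq ⊢
  linarith
end
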